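/- arXiv:2407.09090 — 2 statements merged into one kernel-verified Lean document; each statement's English description precedes it below -/
import Mathlib

section
/- Let K be a compact Hausdorff space, Γ a set, and h a topological embedding of the Alexandroff duplicate AD(K) into [0,1]^Γ such that c0(Γ) ∩ h(AD(K)) is dense in h(AD(K)). Then the uniform metric fragments h(K × {0}): for every nonempty closed subset C of K and every ε > 0 there exists an open subset U of K such that U ∩ C ≠ ∅ and sup_{γ ∈ Γ} |h(x,0)(γ) − h(y,0)(γ)| ≤ ε for all x, y ∈ U ∩ C. -/
/-!
If `C` has a relatively isolated point there is nothing to prove, so let `C` be dense in itself.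
The points `(y, 1)` are isolated in `AD(K)`, hence `h (y, 1) ∈ c₀(Γ)`: each has only finitely
many coordinates above `ε`. By the Baire category theorem on `C`, some open set `O` meeting `C`
has `O ∩ C` in the closure of the points `y` where this number is at most `n`. Every
`(x, 0)` with `x ∈ O ∩ C` is a limit of such `(y, 1)`, and the number of coordinates above `ε`
is lower semicontinuous, so it is at most `n` along `h (·, 0)` on `O ∩ C`. Near a point where
it is maximal, the coordinates above `ε` are exactly those of that point and vary by less than
`ε / 2`, while all the others lie in `[0, ε]`.
-/

open Topology Set

universe u v

/-- A space is *M-scattered* if every nonempty subspace contains a nonempty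
relatively open second-countable subset. -/
def MScattered (X : Type*) [TopologicalSpace X] : Prop :=
  ∀ A : Set X, A.Nonempty → ∃ U : Set X, IsOpen U ∧ (A ∩ U).Nonempty ∧
    SecondCountableTopology ↥(A ∩ U)

/-- Corson compact: embeds into the Σ-product of copies of `[0,1]`. -/
def CorsonCompact (K : Type u) [TopologicalSpace K] : Prop :=
  ∃ (Γ : Type u) (f : K → Γ → unitInterval),
    Topology.IsEmbedding f ∧ ∀ k, {γ | f k γ ≠ 0}.Countable

/-- Eberlein compact: embeds into `c₀(Γ)`. -/
def EberleinCompact (K : Type u) [TopologicalSpace K] : Prop :=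
  ∃ (Γ : Type u) (f : K → Γ → unitInterval),
    Topology.IsEmbedding f ∧ ∀ k, ∀ ε : ℝ, 0 < ε → {γ | ε < (f k γ : ℝ)}.Finite

/-- NY compact: embeds into a σ-product of compact metrizable spaces. -/
def NYCompact (K : Type u) [TopologicalSpace K] : Prop :=
  ∃ (Γ : Type u) (X : Γ → Type u) (t : ∀ γ, TopologicalSpace (X γ)),
    (∀ γ, @CompactSpace (X γ) (t γ)) ∧
    (∀ γ, @TopologicalSpace.MetrizableSpace (X γ) (t γ)) ∧
    ∃ (a : ∀ γ, X γ) (f : K → ∀ γ, X γ),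
      @Topology.IsEmbedding K (∀ γ, X γ) _ (@Pi.topologicalSpace Γ X t) f ∧
      ∀ k, {γ | f k γ ≠ a γ}.Finite

/-- ω-Corson compact: embeds into the σ-product of copies of `[0,1]`. -/
def OmegaCorson (K : Type u) [TopologicalSpace K] : Prop :=
  ∃ (Γ : Type u) (f : K → Γ → unitInterval),
    Topology.IsEmbedding f ∧ ∀ k, {γ | f k γ ≠ 0}.Finite

/-- Semi-Eberlein: embeds into `[0,1]^Γ` with `h(K) ∩ c₀(Γ)` dense in `h(K)`. -/
def SemiEberlein (K : Type u) [TopologicalSpace K] : Prop :=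
  ∃ (Γ : Type u) (h : K → Γ → unitInterval), Topology.IsEmbedding h ∧
    Set.range h ⊆
      closure (Set.range h ∩ {x | ∀ ε : ℝ, 0 < ε → {γ | ε < (x γ : ℝ)}.Finite})

/-- ω-Valdivia: embeds into `[0,1]^Γ` with `h(K) ∩ σ([0,1]^Γ)` dense in `h(K)`. -/
def OmegaValdivia (K : Type u) [TopologicalSpace K] : Prop :=
  ∃ (Γ : Type u) (h : K → Γ → unitInterval), Topology.IsEmbedding h ∧
    Set.range h ⊆ closure (Set.range h ∩ {x | {γ | x γ ≠ 0}.Finite})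

/-- NY-Valdivia: embeds into a product of Hilbert cubes with the σ-product trace dense. -/
def NYValdivia (K : Type u) [TopologicalSpace K] : Prop :=
  ∃ (Γ : Type u) (h : K → Γ → ℕ → unitInterval), Topology.IsEmbedding h ∧
    Set.range h ⊆ closure (Set.range h ∩ {x | {γ | x γ ≠ 0}.Finite})

/-- The topology of the Alexandroff duplicate on `X × Bool`: points `(x, true)` are
isolated, and basic neighborhoods of `(x, false)` are `(U × Bool) \ {(x, true)}`. -/
def adTopology (X : Type*) [TopologicalSpace X] : TopologicalSpace (X × Bool) where
  IsOpen V := ∀ x : X, (x, false) ∈ V →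
    ∃ U : Set X, IsOpen U ∧ x ∈ U ∧ {p : X × Bool | p.1 ∈ U ∧ p ≠ (x, true)} ⊆ V
  isOpen_univ := fun x _ => ⟨Set.univ, isOpen_univ, trivial, fun _ _ => trivial⟩
  isOpen_inter := by
    intro V W hV hW x hx
    obtain ⟨U1, hU1, hx1, hs1⟩ := hV x hx.1
    obtain ⟨U2, hU2, hx2, hs2⟩ := hW x hx.2
    exact ⟨U1 ∩ U2, hU1.inter hU2, ⟨hx1, hx2⟩,
      fun p hp => ⟨hs1 ⟨hp.1.1, hp.2⟩, hs2 ⟨hp.1.2, hp.2⟩⟩⟩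
  isOpen_sUnion := by
    intro S hS x hx
    obtain ⟨V, hVS, hxV⟩ := hx
    obtain ⟨U, hU, hxU, hsub⟩ := hS V hVS x hxV
    exact ⟨U, hU, hxU, fun p hp => ⟨V, hVS, hsub hp⟩⟩

/-- A space is metalindelöf if every open cover has a point-countable open refinement. -/
def Metalindelof (X : Type*) [TopologicalSpace X] : Prop :=
  ∀ 𝒰 : Set (Set X), (∀ U ∈ 𝒰, IsOpen U) → ⋃₀ 𝒰 = Set.univ →
    ∃ 𝒱 : Set (Set X), (∀ V ∈ 𝒱, IsOpen V) ∧ ⋃₀ 𝒱 = Set.univ ∧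
      (∀ V ∈ 𝒱, ∃ U ∈ 𝒰, V ⊆ U) ∧ ∀ x : X, {V ∈ 𝒱 | x ∈ V}.Countable

/-- Hereditarily metalindelöf: every subspace is metalindelöf. -/
def HereditarilyMetalindelof (X : Type*) [TopologicalSpace X] : Prop :=
  ∀ A : Set X, Metalindelof ↥A

open Filter

section LargeCoordinates

variable {X Γ : Type*} [TopologicalSpace X] {f : X → Γ → ℝ} {ε : ℝ}

theorem lowerSemicontinuous_encard_setOf_lt (hf : ∀ γ, Continuous fun x => f x γ) :
    LowerSemicontinuous fun x => {γ | ε < f x γ}.encard := by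
  intro x m hm
  have hm_top : m ≠ ⊤ := (hm.trans_le le_top).ne
  obtain ⟨t, hts, ht⟩ := exists_subset_encard_eq (Order.add_one_le_of_lt hm)
  have ht_fin : t.Finite :=
    encard_lt_top_iff.1 (ht ▸ ENat.add_lt_top.2 ⟨hm_top.lt_top, ENat.one_lt_top⟩)
  filter_upwards [ht_fin.eventually_all.2 fun γ hγ =>
    ((hf γ).tendsto x).eventually_const_lt (hts hγ)] with y hy
  calc m < m + 1 := (ENat.lt_add_one_iff hm_top).2 le_rfl
    _ = t.encard := ht.symm
    _ ≤ {γ | ε < f y γ}.encard := encard_le_encard hy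

theorem exists_isOpen_forall_abs_sub_le_of_encard_le (hf : ∀ γ, Continuous fun x => f x γ)
    (hf₀ : ∀ x γ, 0 ≤ f x γ) (hε : 0 < ε) {A : Set X} (hA : A.Nonempty) {n : ℕ}
    (hn : ∀ x ∈ A, {γ | ε < f x γ}.encard ≤ n) :
    ∃ U, IsOpen U ∧ (U ∩ A).Nonempty ∧
      ∀ x ∈ U ∩ A, ∀ y ∈ U ∩ A, ∀ γ, |f x γ - f y γ| ≤ ε := by
  set L : X → Set Γ := fun x => {γ | ε < f x γ}
  have : Nonempty A := hA.to_subtype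
  obtain ⟨⟨x₀, hx₀⟩, hx₀_max⟩ := ENat.exists_eq_iSup_of_lt_top (f := fun x : A => (L x).encard)
    ((iSup_le fun x : A => hn x x.2).trans_lt (ENat.natCast_lt_top n))
  have hmax : ∀ x ∈ A, (L x).encard ≤ (L x₀).encard := fun x hx =>
    hx₀_max ▸ le_iSup (fun x : A => (L x).encard) ⟨x, hx⟩
  have hL₀ : (L x₀).Finite := encard_lt_top_iff.1 ((hn x₀ hx₀).trans_lt (ENat.natCast_lt_top n))
  set U := ⋂ γ ∈ L x₀, {x | ε < f x γ ∧ |f x γ - f x₀ γ| < ε / 2}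
  have hU : IsOpen U := hL₀.isOpen_biInter fun γ _ =>
    (isOpen_lt continuous_const (hf γ)).inter
      (isOpen_lt ((hf γ).sub continuous_const).abs continuous_const)
  have hx₀U : x₀ ∈ U := mem_iInter₂.2 fun γ hγ => ⟨hγ, by simpa using half_pos hε⟩
  have hLU : ∀ x ∈ U ∩ A, L x = L x₀ := fun x hx =>
    (hL₀.eq_of_subset_of_encard_le (fun γ hγ => (mem_iInter₂.1 hx.1 γ hγ).1) (hmax x hx.2)).symm
  refine ⟨U, hU, ⟨x₀, hx₀U, hx₀⟩, fun x hx y hy γ => ?_⟩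
  by_cases hγ : γ ∈ L x₀
  · have hxγ := (mem_iInter₂.1 hx.1 γ hγ).2
    have hyγ := (mem_iInter₂.1 hy.1 γ hγ).2
    have := abs_sub_le (f x γ) (f x₀ γ) (f y γ)
    rw [abs_sub_comm (f x₀ γ)] at this
    linarith
  · have hxγ : γ ∉ L x := hLU x hx ▸ hγ
    have hyγ : γ ∉ L y := hLU y hy ▸ hγ
    exact abs_sub_le_of_nonneg_of_le (hf₀ x γ) (not_lt.1 hxγ) (hf₀ y γ) (not_lt.1 hyγ)

end LargeCoordinates

theorem IsCompact.exists_isOpen_inter_subset_closure {X ι : Type*} [TopologicalSpace X]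
    [T2Space X] [Countable ι] {C : Set X} (hC : IsCompact C) (hne : C.Nonempty)
    {S : ι → Set X} (hS : C ⊆ ⋃ i, S i) :
    ∃ i O, IsOpen O ∧ (O ∩ C).Nonempty ∧ O ∩ C ⊆ closure (S i) := by
  have : CompactSpace C := isCompact_iff_compactSpace.1 hC
  have : Nonempty C := hne.to_subtype
  obtain ⟨i, x, hx⟩ := nonempty_interior_of_iUnion_of_closed
    (f := fun i => closure (((↑) : C → X) ⁻¹' S i)) (fun _ => isClosed_closure)
    (eq_univ_of_forall fun x => mem_iUnion.2 <|
      (mem_iUnion.1 (hS x.2)).imp fun _ hi => subset_closure hi)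
  obtain ⟨O, hO, hOC⟩ :=
    isOpen_induced_iff.1 (isOpen_interior (s := closure (((↑) : C → X) ⁻¹' S i)))
  refine ⟨i, O, hO, ⟨x, (hOC ▸ hx : x ∈ ((↑) : C → X) ⁻¹' O), x.2⟩, ?_⟩
  rintro x ⟨hxO, hxC⟩
  have hx : (⟨x, hxC⟩ : C) ∈ interior (closure (((↑) : C → X) ⁻¹' S i)) := by
    rw [← hOC]
    exact hxO
  exact continuous_subtype_val.closure_preimage_subset _ (interior_subset hx)

theorem AccPt.of_inter_subset_closure {X : Type*} [TopologicalSpace X] [T1Space X] {x : X}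
    {C O S : Set X} (hx : AccPt x (𝓟 C)) (hO : O ∈ 𝓝 x) (hOS : O ∩ C ⊆ closure S) :
    AccPt x (𝓟 S) := by
  rw [← mem_derivedSet, ← derivedSet_closure]
  exact derivedSet_mono _ _ hOS (hx.nhds_inter hO)

theorem Topology.IsInducing.apply_mem_of_isOpen_singleton {X Y : Type*} [TopologicalSpace X]
    [TopologicalSpace Y] {h : X → Y} (hh : IsInducing h) {D : Set Y}
    (hD : range h ⊆ closure (range h ∩ D)) {p : X} (hp : IsOpen {p}) : h p ∈ D := by
  obtain ⟨t, ht, hpre⟩ := hh.isOpen_iff.1 hp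
  obtain ⟨_, hqt, ⟨q, rfl⟩, hqD⟩ :=
    mem_closure_iff.1 (hD (mem_range_self p)) t ht (hpre.symm ▸ rfl : p ∈ h ⁻¹' t)
  obtain rfl : q = p := hpre.subset hqt
  exact hqD

section AlexandroffDuplicate

variable {X : Type*} [TopologicalSpace X]

theorem continuous_mk_false_adTopology : Continuous[_, adTopology X] fun x : X => (x, false) := by
  refine continuous_def.2 fun V hV => isOpen_iff_forall_mem_open.2 fun x hx => ?_
  obtain ⟨U, hU, hxU, hUV⟩ := hV x hx
  exact ⟨U, fun y hy => hUV ⟨hy, by simp⟩, hU, hxU⟩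

theorem isOpen_singleton_mk_true_adTopology (x : X) : IsOpen[adTopology X] {(x, true)} := by
  rintro y hy
  simp at hy

theorem mk_false_mem_closure_adTopology {x : X} {S : Set X} (hx : AccPt x (𝓟 S)) :
    (x, false) ∈ closure[adTopology X] ((·, true) '' S) := by
  let _ : TopologicalSpace (X × Bool) := adTopology X
  refine mem_closure_iff.2 fun V hV hxV => ?_
  obtain ⟨U, hU, hxU, hUV⟩ := hV x hxV
  obtain ⟨y, ⟨hyU, hyS⟩, hyx⟩ := accPt_iff_nhds.1 hx U (hU.mem_nhds hxU)
  exact ⟨(y, true), hUV ⟨hyU, by simp [hyx]⟩, y, hyS, rfl⟩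

end AlexandroffDuplicate

/-- if `h` embeds the Alexandroff duplicate of `K` into `[0,1]^Γ` with
`c₀(Γ) ∩ h(AD(K))` dense in `h(AD(K))`, then the uniform metric fragments
`h(K × {0})`. -/
theorem uniformMetric_fragments_of_AD_semiEberlein_embedding
    (K : Type u) [TopologicalSpace K] [CompactSpace K] [T2Space K]
    (Γ : Type v) (h : K × Bool → Γ → unitInterval)
    (hemb : @Topology.IsEmbedding (K × Bool) (Γ → unitInterval) (adTopology K) _ h)
    (hdense : Set.range h ⊆
      closure (Set.range h ∩ {x | ∀ ε : ℝ, 0 < ε → {γ | ε < (x γ : ℝ)}.Finite}))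
    (C : Set K) (hC : IsClosed C) (hCne : C.Nonempty) (ε : ℝ) (hε : 0 < ε) :
    ∃ U : Set K, IsOpen U ∧ (U ∩ C).Nonempty ∧
      ∀ x ∈ U ∩ C, ∀ y ∈ U ∩ C, ∀ γ : Γ,
        |(h (x, false) γ : ℝ) - (h (y, false) γ : ℝ)| ≤ ε := by
  let _ : TopologicalSpace (K × Bool) := adTopology K
  by_cases hperf : Preperfect C
  · set L : K × Bool → Set Γ := fun p => {γ | ε < (h p γ : ℝ)}
    have hcoord : ∀ γ, Continuous fun p => (h p γ : ℝ) := fun γ =>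
      continuous_subtype_val.comp ((continuous_apply γ).comp hemb.continuous)
    have hfin (y : K) : (L (y, true)).encard ≠ ⊤ := (encard_lt_top_iff.2 <|
      hemb.isInducing.apply_mem_of_isOpen_singleton hdense
        (isOpen_singleton_mk_true_adTopology y) ε hε).ne
    obtain ⟨n, O, hO, hOC, hOS⟩ := hC.isCompact.exists_isOpen_inter_subset_closure hCne
      (S := fun n : ℕ => {y | (L (y, true)).encard ≤ n}) fun y _ =>
        mem_iUnion.2 <| (ENat.ne_top_iff_exists.1 (hfin y)).imp fun _ hn => hn.ge
    have hbound : ∀ x ∈ O ∩ C, (L (x, false)).encard ≤ n := by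
      rintro x ⟨hxO, hxC⟩
      exact closure_minimal (by rintro _ ⟨y, hy, rfl⟩; exact hy)
        ((lowerSemicontinuous_encard_setOf_lt hcoord).isClosed_preimage n)
        (mk_false_mem_closure_adTopology ((hperf x hxC).of_inter_subset_closure
          (hO.mem_nhds hxO) hOS))
    obtain ⟨U, hU, hUne, hUε⟩ := exists_isOpen_forall_abs_sub_le_of_encard_le
      (fun γ => (hcoord γ).comp continuous_mk_false_adTopology)
      (fun x γ => (h (x, false) γ).2.1) hε hOC hbound
    rw [← inter_assoc] at hUne hUε
    exact ⟨U ∩ O, hU.inter hO, hUne, hUε⟩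
  · obtain ⟨x, hxC, hx⟩ : ∃ x ∈ C, ¬AccPt x (𝓟 C) := by simpa [Preperfect] using hperf
    obtain ⟨U, hU, hUx⟩ : ∃ U ∈ 𝓝 x, ∀ y ∈ U ∩ C, y = x := by simpa [accPt_iff_nhds] using hx
    obtain ⟨V, hVU, hV, hxV⟩ := mem_nhds_iff.1 hU
    refine ⟨V, hV, ⟨x, hxV, hxC⟩, fun y hy z hz γ => ?_⟩
    rw [hUx y ⟨hVU hy.1, hy.2⟩, hUx z ⟨hVU hz.1, hz.2⟩, sub_self, abs_zero]
    exact hε.le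
end

section
/- If K is a Corson compact Hausdorff space that is not Eberlein compact, then the Alexandroff duplicate AD(K) is Corson compact but not semi-Eberlein. -/
open Topology Set

universe u v

/-!
`AD(K)` embeds into a Σ-product: keep the coordinates of `K` and add, for each `y`, the
indicator of the isolated point `(y, true)`.

Conversely, let `h` embed `AD(K)` into `[0,1]^Γ` with `h(AD K) ∩ c₀(Γ)` dense. Isolated points
of `AD(K)` are then sent into `c₀(Γ)`, in particular `φ = h(·, true)` is `c₀`-valued. Put
`g = h(·, false)`. Since `φ y → g x` as `y → x` with `y ≠ x`, for fixed `γ` and `ε > 0` only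
finitely many `x` satisfy `|φ x γ - g x γ| ≥ ε`, by compactness. A Corson compactum is
Fréchet–Urysohn, so at a non-isolated `x` the point `g x` is a coordinatewise limit of `φ` along
a sequence (at an isolated `x` it lies in `c₀(Γ)` itself), and each level set `{γ | a < g x γ}`
is covered by countably many finite sets. Colouring `Γ` by the index of the
first witness, taken over the finitely many exceptional `x`, makes
`(γ, k) ↦ (g x γ - 1/(k+1))⁺ / (k + colour + 2)` a `c₀`-valued embedding of `K`.
-/

open Filter

theorem Set.Countable.setOf_finset_subset {Γ : Type*} {S : Set Γ} (hS : S.Countable) :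
    {F : Finset Γ | ↑F ⊆ S}.Countable :=
  ((countable_ofPred_finite_subset hS).preimage Finset.coe_injective).mono
    fun F hF => by exact ⟨F.finite_toSet, hF⟩

theorem Set.Countable.exists_superset_forall_finset_subset {Γ : Type*} {S : Set Γ}
    (hS : S.Countable) (P : Finset Γ → Set Γ) (hP : ∀ F, (P F).Countable) :
    ∃ T : Set Γ, T.Countable ∧ S ⊆ T ∧ ∀ F : Finset Γ, ↑F ⊆ T → P F ⊆ T := by
  let T : ℕ → Set Γ := fun m => Nat.rec S (fun _ T => T ∪ ⋃ F ∈ {F : Finset Γ | ↑F ⊆ T}, P F) m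
  have hT_succ (m : ℕ) : T (m + 1) = T m ∪ ⋃ F ∈ {F : Finset Γ | ↑F ⊆ T m}, P F := rfl
  have hT_count (m : ℕ) : (T m).Countable := by
    induction m with
    | zero => exact hS
    | succ m ih => exact hT_succ m ▸ ih.union (ih.setOf_finset_subset.biUnion fun F _ => hP F)
  have hT_mono : Monotone T := monotone_nat_of_le_succ fun m => hT_succ m ▸ subset_union_left
  refine ⟨⋃ m, T m, countable_iUnion hT_count, subset_iUnion T 0, fun F hF => ?_⟩
  obtain ⟨m, hm⟩ := hT_mono.directed_le.exists_mem_subset_of_finset_subset_biUnion hF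
  exact (subset_biUnion_of_mem (u := P) hm).trans
    ((subset_union_right.trans (hT_succ m).ge).trans (subset_iUnion T (m + 1)))

theorem Set.Countable.exists_seq_finset_eventually_mem {Γ : Type*} {T : Set Γ}
    (hT : T.Countable) :
    ∃ F : ℕ → Finset Γ, (∀ m, ↑(F m) ⊆ T) ∧ ∀ γ ∈ T, ∀ᶠ m in atTop, γ ∈ F m := by
  classical
  rcases T.eq_empty_or_nonempty with rfl | hne
  · exact ⟨fun _ => ∅, fun _ => by simp, fun _ h => h.elim⟩
  obtain ⟨e, rfl⟩ := hT.exists_eq_range hne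
  refine ⟨fun m => (Finset.range m).image e, fun m => by simp, ?_⟩
  rintro _ ⟨j, rfl⟩
  filter_upwards [eventually_gt_atTop j] with m hm
  exact Finset.mem_image_of_mem e (Finset.mem_range.2 hm)

theorem frechetUrysohnSpace_of_isEmbedding {X Γ : Type*} [TopologicalSpace X]
    {f : X → Γ → unitInterval} (hf : IsEmbedding f) (hsupp : ∀ x, {γ | f x γ ≠ 0}.Countable) :
    FrechetUrysohnSpace X := by
  refine ⟨fun A x hx => ?_⟩
  have hpick (F : Finset Γ) (n : ℕ) :
      ∃ a ∈ A, ∀ γ ∈ F, dist (f a γ) (f x γ) < 1 / (n + 1) := by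
    have hopen : IsOpen (⋂ γ ∈ F, {y | dist (f y γ) (f x γ) < 1 / (n + 1)}) :=
      isOpen_biInter_finset fun γ _ =>
        isOpen_lt (((continuous_apply γ).comp hf.continuous).dist continuous_const) continuous_const
    obtain ⟨a, ha, haA⟩ := mem_closure_iff.1 hx _ hopen (by simp [Nat.cast_add_one_pos])
    exact ⟨a, haA, by simpa using ha⟩
  choose pick hpickA hpick using hpick
  obtain ⟨T, hT, hxT, hpickT⟩ := (hsupp x).exists_superset_forall_finset_subset
    (fun F => ⋃ n, {γ | f (pick F n) γ ≠ 0}) fun F => countable_iUnion fun n => hsupp _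
  obtain ⟨F, hFT, hF⟩ := hT.exists_seq_finset_eventually_mem
  refine ⟨fun m => pick (F m) m, fun m => hpickA _ _, ?_⟩
  refine hf.tendsto_nhds_iff.2 (tendsto_pi_nhds.2 fun γ => ?_)
  by_cases hγ : γ ∈ T
  · refine tendsto_iff_dist_tendsto_zero.2 (squeeze_zero' (.of_forall fun _ => dist_nonneg) ?_
      tendsto_one_div_add_atTop_nhds_zero_nat)
    filter_upwards [hF γ hγ] with m hm using (hpick _ _ γ hm).le
  · have hx0 : f x γ = 0 := not_not.1 fun h => hγ (hxT h)
    have hpick0 (m : ℕ) : f (pick (F m) m) γ = 0 :=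
      not_not.1 fun h => hγ (hpickT _ (hFT m) (mem_iUnion.2 ⟨m, h⟩))
    simp [hpick0, hx0]

theorem CorsonCompact.frechetUrysohnSpace {X : Type u} [TopologicalSpace X]
    (hX : CorsonCompact X) : FrechetUrysohnSpace X :=
  let ⟨_, _, hf, hsupp⟩ := hX
  frechetUrysohnSpace_of_isEmbedding hf hsupp

theorem continuous_coe_apply {Γ : Type*} (γ : Γ) :
    Continuous fun q : Γ → unitInterval => (q γ : ℝ) :=
  continuous_subtype_val.comp (continuous_apply γ)

theorem Topology.IsInducing.mem_of_isOpen_singleton {X Y : Type*} [TopologicalSpace X]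
    [TopologicalSpace Y] {h : X → Y} (hh : IsInducing h) {S : Set Y}
    (hS : range h ⊆ closure (range h ∩ S)) {p : X} (hp : IsOpen {p}) : h p ∈ S := by
  have hdense : Dense (h ⁻¹' S) :=
    hh.dense_iff.2 fun x => image_preimage_eq_range_inter (f := h) ▸ hS ⟨x, rfl⟩
  obtain ⟨q, rfl, hq⟩ := hdense.inter_open_nonempty {p} hp (singleton_nonempty p)
  exact hq

theorem finite_setOf_le_abs_of_tendsto_nhdsNE {X : Type*} [TopologicalSpace X] [CompactSpace X]
    {D : X → ℝ} (hD : ∀ x, Tendsto D (𝓝[≠] x) (𝓝 0)) {ε : ℝ} (hε : 0 < ε) :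
    {x | ε ≤ |D x|}.Finite := by
  have : {x | ε ≤ |D x|}ᶜ ∈ codiscrete X := by
    refine mem_codiscrete.2 fun x => disjoint_principal_right.2 ?_
    rw [compl_compl]
    filter_upwards [(hD x).eventually (Metric.ball_mem_nhds 0 hε)] with y hy
    simpa using hy
  simpa using cofinite_le_codiscrete this

def c0 (Γ : Type*) : Set (Γ → unitInterval) :=
  {x | ∀ ε : ℝ, 0 < ε → {γ | ε < (x γ : ℝ)}.Finite}

theorem exists_colouring_finite_levelSets {X Γ : Type*} {φ g : X → Γ → unitInterval}
    (hφ : ∀ x, φ x ∈ c0 Γ)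
    (hE : ∀ γ ε, 0 < ε → {x | ε ≤ |(φ x γ : ℝ) - g x γ|}.Finite)
    (hv : ∀ x, ∃ v : ℕ → Γ → unitInterval, (∀ m, v m ∈ c0 Γ) ∧
      ∀ γ (t : ℝ), t < g x γ → ∃ m, t < v m γ)
    {a : ℝ} (ha : 0 < a) : ∃ c : Γ → ℕ, ∀ x N, {γ | a < g x γ ∧ c γ < N}.Finite := by
  choose v hv_c0 hv using hv
  have ha2 : 0 < a / 2 := half_pos ha
  let rank (x : X) (γ : Γ) : ℕ := sInf {m | a / 2 < v x m γ}
  refine ⟨fun γ => (hE γ _ ha2).toFinset.sup (rank · γ), fun x N => ?_⟩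
  refine ((hφ x _ ha2).union ((finite_Iio N).biUnion fun m _ => hv_c0 x m _ ha2)).subset ?_
  rintro γ ⟨hgγ, hcγ⟩
  by_cases hx : a / 2 ≤ |(φ x γ : ℝ) - g x γ|
  · refine .inr (mem_biUnion (x := rank x γ) ?_ (Nat.sInf_mem (hv x γ _ (by linarith))))
    exact (Finset.le_sup ((hE γ _ ha2).mem_toFinset.2 hx)).trans_lt hcγ
  · have := (abs_sub_lt_iff.1 (not_le.1 hx)).2
    exact .inl (show a / 2 < φ x γ by linarith)

theorem max_sub_div_mem_unitInterval {t a d : ℝ} (ht : t ∈ unitInterval) (ha : 0 ≤ a)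
    (hd : 1 ≤ d) : max 0 (t - a) / d ∈ unitInterval :=
  ⟨by positivity, div_le_one_of_le₀ (max_le (by linarith) (by linarith [ht.2])) (by linarith)⟩

theorem lt_and_lt_one_div_of_lt_max_sub_div {ε t a d : ℝ} (hε : 0 < ε) (ht : t ≤ 1)
    (ha : 0 ≤ a) (hd : 0 < d) (h : ε < max 0 (t - a) / d) : a < t ∧ d < 1 / ε := by
  rw [lt_div_iff₀ hd] at h
  have hpos : 0 < max 0 (t - a) := (mul_pos hε hd).trans h
  refine ⟨by simpa [lt_max_iff] using hpos, ?_⟩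
  rw [lt_div_iff₀ hε]
  linarith [max_le (zero_le_one' ℝ) (by linarith : t - a ≤ 1)]

theorem tendsto_max_sub_one_div {t : ℝ} (ht : 0 ≤ t) :
    Tendsto (fun k : ℕ => max 0 (t - 1 / (k + 1))) atTop (𝓝 t) := by
  have := (tendsto_const_nhds (x := (0 : ℝ))).max
    ((tendsto_const_nhds (x := t)).sub (tendsto_one_div_add_atTop_nhds_zero_nat (𝕜 := ℝ)))
  rwa [sub_zero, max_eq_right ht] at this

theorem eberleinCompact_of_colouring {X Γ : Type u} [TopologicalSpace X] [CompactSpace X]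
    {g : X → Γ → unitInterval} (hg : Continuous g) (hg_inj : Function.Injective g)
    (hcol : ∀ a : ℝ, 0 < a → ∃ c : Γ → ℕ, ∀ x N, {γ | a < g x γ ∧ c γ < N}.Finite) :
    EberleinCompact X := by
  choose c hc using fun k : ℕ => hcol (1 / (k + 1)) Nat.one_div_pos_of_nat
  have hd (p : Γ × ℕ) : (0 : ℝ) < p.2 + c p.2 p.1 + 2 := by positivity
  -- the cut at `1 / (k + 1)` keeps `g` recoverable as `k → ∞`; the damping by the colour gives `c₀`
  let r (x : X) (p : Γ × ℕ) : ℝ := max 0 ((g x p.1 : ℝ) - 1 / (p.2 + 1)) / (p.2 + c p.2 p.1 + 2)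
  have hr (x : X) (p : Γ × ℕ) : r x p ∈ unitInterval :=
    max_sub_div_mem_unitInterval (g x p.1).2 (by positivity) (by linarith [hd p])
  let ψ (x : X) (p : Γ × ℕ) : unitInterval := ⟨r x p, hr x p⟩
  have hψ : Continuous ψ := continuous_pi fun p => Continuous.subtype_mk
    ((continuous_const.max (((continuous_coe_apply p.1).comp hg).sub
      continuous_const)).div_const _) _
  have hr_lim (x : X) (γ : Γ) :
      Tendsto (fun k : ℕ => r x (γ, k) * (k + c k γ + 2)) atTop (𝓝 (g x γ)) := by
    simpa [r, div_mul_cancel₀ _ (hd (γ, _)).ne'] using tendsto_max_sub_one_div (g x γ).2.1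
  have hψ_inj : Function.Injective ψ := fun x y hxy => hg_inj <| funext fun γ => Subtype.ext <|
    tendsto_nhds_unique (hr_lim x γ) <| by
      simpa [show r x = r y from funext fun p => congrArg Subtype.val (congrFun hxy p)]
        using hr_lim y γ
  refine ⟨Γ × ℕ, ψ, (hψ.isClosedEmbedding hψ_inj).isEmbedding, fun x ε hε => ?_⟩
  let N := ⌈1 / ε⌉₊
  refine ((finite_Iio N).biUnion fun k _ => (hc k x N).prod (finite_singleton k)).subset ?_
  rintro ⟨γ, k⟩ hp
  obtain ⟨hgγ, hdε⟩ := lt_and_lt_one_div_of_lt_max_sub_div hε (g x γ).2.2 (by positivity) (hd _) hp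
  have hdN : (k : ℝ) + c k γ + 2 < N := hdε.trans_le (Nat.le_ceil _)
  have hkN : k < N := by exact_mod_cast (by linarith [(c k γ).cast_nonneg (α := ℝ)] : (k : ℝ) < N)
  have hcN : c k γ < N := by exact_mod_cast (by linarith [k.cast_nonneg (α := ℝ)] : (c k γ : ℝ) < N)
  exact mem_biUnion hkN ⟨⟨hgγ, hcN⟩, rfl⟩

namespace adTopology

variable {X Γ : Type*} [TopologicalSpace X]

-- In this namespace `X × Bool` carries the Alexandroff duplicate topology, not the product one.
attribute [local instance high] adTopology

theorem isOpen_iff {s : Set (X × Bool)} :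
    IsOpen s ↔ ∀ x : X, (x, false) ∈ s →
      ∃ U : Set X, IsOpen U ∧ x ∈ U ∧ {p : X × Bool | p.1 ∈ U ∧ p ≠ (x, true)} ⊆ s :=
  Iff.rfl

theorem isOpen_singleton_true (x : X) : IsOpen {(x, true)} :=
  isOpen_iff.2 fun _ h => by simp at h

theorem isOpen_singleton_false {x : X} (hx : IsOpen {x}) : IsOpen {(x, false)} := by
  refine isOpen_iff.2 fun z hz => ⟨{x}, hx, by simpa using hz, ?_⟩
  rintro ⟨y, _ | _⟩ ⟨rfl, h⟩ <;> simp_all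

theorem isClopen_singleton_true [T1Space X] (x : X) : IsClopen {(x, true)} := by
  refine ⟨⟨isOpen_iff.2 fun z _ => ?_⟩, isOpen_singleton_true x⟩
  by_cases hzx : z = x
  · subst hzx
    exact ⟨univ, isOpen_univ, trivial, fun p hp => hp.2⟩
  · refine ⟨{x}ᶜ, isOpen_compl_singleton, hzx, fun p hp h => hp.1 ?_⟩
    rw [mem_singleton_iff.1 h]
    rfl

theorem continuous_fst : Continuous (Prod.fst : X × Bool → X) :=
  continuous_def.2 fun U hU => isOpen_iff.2 fun _ hx => ⟨U, hU, hx, fun _ hp => hp.1⟩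

theorem comap_fst_nhds_inf_le_nhds (x : X) :
    comap Prod.fst (𝓝 x) ⊓ 𝓟 {(x, true)}ᶜ ≤ 𝓝 (x, false) := by
  intro s hs
  obtain ⟨V, hVs, hV, hxV⟩ := mem_nhds_iff.1 hs
  obtain ⟨U, hU, hxU, hUV⟩ := isOpen_iff.1 hV x hxV
  exact mem_of_superset (inter_mem_inf (preimage_mem_comap (hU.mem_nhds hxU))
    (mem_principal_self _)) (hUV.trans hVs)

theorem continuous_mk_false : Continuous (fun x : X => (x, false)) := by
  refine continuous_iff_continuousAt.2 fun x => Tendsto.mono_right ?_ (comap_fst_nhds_inf_le_nhds x)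
  exact tendsto_inf.2 ⟨tendsto_comap_iff.2 tendsto_id, tendsto_principal.2 (by simp)⟩

theorem tendsto_mk_true_nhdsNE (x : X) :
    Tendsto (fun y : X => (y, true)) (𝓝[≠] x) (𝓝 (x, false)) := by
  refine Tendsto.mono_right ?_ (comap_fst_nhds_inf_le_nhds x)
  exact tendsto_inf.2 ⟨tendsto_comap_iff.2 nhdsWithin_le_nhds,
    tendsto_principal.2 (eventually_nhdsWithin_of_forall fun y hy => by simpa using hy)⟩

theorem compactSpace [CompactSpace X] : CompactSpace (X × Bool) := by
  refine ⟨isCompact_iff_ultrafilter_le_nhds.2 fun 𝒰 _ => ?_⟩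
  obtain ⟨x, -, hx⟩ := isCompact_univ.ultrafilter_le_nhds (𝒰.map Prod.fst) (by simp)
  by_cases h : {(x, true)} ∈ 𝒰
  · exact ⟨(x, true), trivial, (le_pure_iff.2 h).trans (pure_le_nhds _)⟩
  · exact ⟨(x, false), trivial, le_trans (le_inf (map_le_iff_le_comap.1 hx)
      (le_principal_iff.2 (Ultrafilter.compl_mem_iff_notMem.2 h))) (comap_fst_nhds_inf_le_nhds x)⟩

theorem corsonCompact {X : Type u} [TopologicalSpace X] [CompactSpace X] [T1Space X]
    (hX : CorsonCompact X) : CorsonCompact (X × Bool) := by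
  obtain ⟨Γ, f, hf, hsupp⟩ := hX
  have := compactSpace (X := X)
  let F : X × Bool → Γ ⊕ X → unitInterval := fun p =>
    Sum.elim (f p.1) fun y => indicator {(y, true)} 1 p
  have hF : Continuous F := continuous_pi fun
    | .inl γ => (continuous_apply γ).comp (hf.continuous.comp continuous_fst)
    | .inr y => continuous_const.indicator <| by
        simp [(isClopen_singleton_true y).frontier_eq]
  have hF_inj : Function.Injective F := by
    rintro ⟨x, b⟩ ⟨x', b'⟩ h
    obtain rfl : x = x' := hf.injective (funext fun γ => congrFun h (.inl γ))
    have := congrFun h (.inr x)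
    cases b <;> cases b' <;> simp_all [F]
  refine ⟨Γ ⊕ X, F, (hF.isClosedEmbedding hF_inj).isEmbedding, fun p => ?_⟩
  refine (((hsupp p.1).image Sum.inl).union ((countable_singleton p.1).image Sum.inr)).mono ?_
  rintro (γ | y) hy
  · exact .inl ⟨γ, hy, rfl⟩
  · refine .inr ⟨y, ?_, rfl⟩
    by_contra hne
    exact hy (indicator_of_notMem (by rintro rfl; exact hne rfl) _)

theorem exists_seq_c0_approx [FrechetUrysohnSpace X] {h : X × Bool → Γ → unitInterval}
    (hh : Continuous h) (hc0 : ∀ p, IsOpen {p} → h p ∈ c0 Γ) (x : X) :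
    ∃ v : ℕ → Γ → unitInterval, (∀ m, v m ∈ c0 Γ) ∧
      ∀ γ (t : ℝ), t < h (x, false) γ → ∃ m, t < v m γ := by
  by_cases hx : IsOpen {x}
  · exact ⟨fun _ => h (x, false), fun _ => hc0 _ (isOpen_singleton_false hx), fun _ _ ht => ⟨0, ht⟩⟩
  have : (𝓝[≠] x).NeBot := ⟨mt (isOpen_singleton_iff_punctured_nhds x).2 hx⟩
  obtain ⟨y, hyx, hy⟩ := mem_closure_iff_seq_limit.1 (mem_closure_iff_nhdsWithin_neBot.2 this)
  refine ⟨fun m => h (y m, true), fun m => hc0 _ (isOpen_singleton_true _), fun γ t ht => ?_⟩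
  have hlim : Tendsto (fun m => (h (y m, true) γ : ℝ)) atTop (𝓝 (h (x, false) γ)) :=
    ((continuous_coe_apply γ).tendsto _).comp <| (hh.tendsto _).comp <|
      (tendsto_mk_true_nhdsNE x).comp (tendsto_nhdsWithin_iff.2 ⟨hy, .of_forall hyx⟩)
  exact (hlim.eventually (lt_mem_nhds ht)).exists

theorem eberleinCompact_of_semiEberlein {X : Type u} [TopologicalSpace X] [CompactSpace X]
    [FrechetUrysohnSpace X] (hX : SemiEberlein (X × Bool)) : EberleinCompact X := by
  obtain ⟨Γ, h, hh, hdense⟩ := hX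
  have hc0 (p : X × Bool) (hp : IsOpen {p}) : h p ∈ c0 Γ :=
    hh.isInducing.mem_of_isOpen_singleton hdense hp
  have hg : Continuous fun x : X => h (x, false) := hh.continuous.comp continuous_mk_false
  refine eberleinCompact_of_colouring hg (hh.injective.comp (Prod.mk_left_injective false))
    fun a ha => exists_colouring_finite_levelSets (fun x => hc0 _ (isOpen_singleton_true x))
      (fun γ ε hε => finite_setOf_le_abs_of_tendsto_nhdsNE (fun x => ?_) hε)
      (exists_seq_c0_approx hh.continuous hc0) ha
  have hφ := ((continuous_coe_apply γ).tendsto _).comp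
    ((hh.continuous.tendsto _).comp (tendsto_mk_true_nhdsNE x))
  have hg' := (((continuous_coe_apply γ).comp hg).tendsto x).mono_left
    (nhdsWithin_le_nhds (s := {x}ᶜ))
  simpa using hφ.sub hg'

end adTopology

/-- if `K` is Corson compact but not Eberlein compact, then `AD(K)` is
Corson compact but not semi-Eberlein. -/
theorem AD_corson_not_semiEberlein
    (K : Type u) [TopologicalSpace K] [CompactSpace K] [T2Space K]
    (hC : CorsonCompact K) (hnE : ¬ EberleinCompact K) :
    @CorsonCompact (K × Bool) (adTopology K) ∧
    ¬ @SemiEberlein (K × Bool) (adTopology K) := by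
  have := hC.frechetUrysohnSpace
  exact ⟨adTopology.corsonCompact hC,
    fun hSE => hnE (adTopology.eberleinCompact_of_semiEberlein hSE)⟩
end
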